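/- Let Ψ ∈ ℂ³ and set 𝒫 = Ψ Ψᴴ, a 3×3 complex Hermitian matrix. Then 𝒫 satisfies 𝒫 ∗ 𝒫 = 0, where ∗ is the Freudenthal product X ∗ Y = X∘Y − ½(X tr Y + Y tr X) − ½(tr(X∘Y) − tr X tr Y) I; conversely, a nonzero 3×3 complex Hermitian matrix 𝒫 with 𝒫 ∗ 𝒫 = 0 and tr 𝒫 > 0 is of the form Ψ Ψᴴ for some Ψ ∈ ℂ³. -/

import Mathlib

/-!
For a 3×3 matrix the Freudenthal square `X ∗ X = X² - (tr X) X + ½((tr X)² - tr X²) I` is the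
adjugate of `X` (Cayley–Hamilton). The adjugate of a 3×3 matrix vanishes exactly when all its
2×2 minors do, i.e. when the matrix has rank at most one. So `ΨΨᴴ ∗ ΨΨᴴ = 0`; conversely, if
`P ∗ P = 0` and `P` is Hermitian with a positive diagonal entry `P k k` (which `tr P > 0`
provides), then `P = ΨΨᴴ` with `Ψ` the `k`-th column of `P` divided by `√(P k k)`.
-/

open Matrix

/-- The Jordan product on 3×3 complex matrices. -/
noncomputable def jmul (X Y : Matrix (Fin 3) (Fin 3) ℂ) : Matrix (Fin 3) (Fin 3) ℂ :=
  (1 / 2 : ℂ) • (X * Y + Y * X)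

/-- The Freudenthal product on 3×3 complex matrices. -/
noncomputable def freudenthal (X Y : Matrix (Fin 3) (Fin 3) ℂ) : Matrix (Fin 3) (Fin 3) ℂ :=
  jmul X Y - (1 / 2 : ℂ) • (Y.trace • X + X.trace • Y)
    - (1 / 2 : ℂ) • (((jmul X Y).trace - X.trace * Y.trace) • (1 : Matrix (Fin 3) (Fin 3) ℂ))

open RCLike

theorem freudenthal_self_eq_adjugate (X : Matrix (Fin 3) (Fin 3) ℂ) :
    freudenthal X X = adjugate X := by
  ext i j
  fin_cases i <;> fin_cases j <;>
    simp [freudenthal, jmul, adjugate_fin_three, trace_fin_three, mul_apply, Fin.sum_univ_three,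
      one_apply] <;> ring

namespace Matrix

theorem adjugate_vecMulVec_fin_three {R : Type*} [CommRing R] (u v : Fin 3 → R) :
    adjugate (vecMulVec u v) = 0 := by
  ext i j
  fin_cases i <;> fin_cases j <;> simp [adjugate_fin_three, vecMulVec_apply] <;> ring

-- The entries of the adjugate of a 3×3 matrix are, up to sign, its 2×2 minors.
theorem apply_mul_apply_eq_of_adjugate_eq_zero {R : Type*} [CommRing R]
    {A : Matrix (Fin 3) (Fin 3) R} (hA : adjugate A = 0) (i j k : Fin 3) :
    A k k * A i j = A i k * A k j := by
  have h : ∀ a b, adjugate A a b = 0 := by simp [hA]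
  simp [adjugate_fin_three, Fin.forall_fin_succ] at h
  fin_cases i <;> fin_cases j <;> fin_cases k <;> simp <;> grind

theorem exists_pos_re_apply_self_of_pos_re_trace {𝕜 n : Type*} [RCLike 𝕜] [Fintype n]
    {P : Matrix n n 𝕜} (h : 0 < re P.trace) : ∃ k, 0 < re (P k k) := by
  rw [trace, map_sum] at h
  obtain ⟨k, -, hk⟩ := Finset.exists_lt_of_sum_lt (f := fun _ => (0 : ℝ))
    (g := fun i => re (P i i)) (by simpa using h)
  exact ⟨k, hk⟩

theorem IsHermitian.exists_eq_vecMulVec_star {𝕜 n : Type*} [RCLike 𝕜]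
    {P : Matrix n n 𝕜} (hP : P.IsHermitian) {k : n} (hk : 0 < re (P k k))
    (hminor : ∀ i j, P k k * P i j = P i k * P k j) :
    ∃ Ψ : n → 𝕜, P = vecMulVec Ψ (star Ψ) := by
  have hsqrt : ((√(re (P k k)) : ℝ) : 𝕜) * (√(re (P k k)) : ℝ) = P k k := by
    rw [← ofReal_mul, Real.mul_self_sqrt hk.le, hP.coe_re_apply_self]
  have hne : ((√(re (P k k)) : ℝ) : 𝕜) ≠ 0 := by
    rw [ofReal_ne_zero]; positivity
  refine ⟨fun i => P i k / (√(re (P k k)) : ℝ), ?_⟩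
  ext i j
  rw [vecMulVec_apply, Pi.star_apply, star_div₀, hP.apply, star_def, conj_ofReal]
  field_simp
  linear_combination hminor i j + P i j * hsqrt

end Matrix

theorem freudenthal_square_zero_iff_rank_one :
    (∀ Ψ : Fin 3 → ℂ,
      freudenthal (Matrix.of fun i j => Ψ i * star (Ψ j))
        (Matrix.of fun i j => Ψ i * star (Ψ j)) = 0) ∧
    (∀ P : Matrix (Fin 3) (Fin 3) ℂ, P.IsHermitian → P ≠ 0 → freudenthal P P = 0 →
      0 < P.trace.re → ∃ Ψ : Fin 3 → ℂ, P = Matrix.of fun i j => Ψ i * star (Ψ j)) := by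
  refine ⟨fun Ψ => ?_, fun P hP _ hF htr => ?_⟩
  · rw [freudenthal_self_eq_adjugate]
    exact adjugate_vecMulVec_fin_three Ψ (star Ψ)
  · rw [freudenthal_self_eq_adjugate] at hF
    obtain ⟨k, hk⟩ := exists_pos_re_apply_self_of_pos_re_trace (P := P) (by simpa using htr)
    exact hP.exists_eq_vecMulVec_star hk (apply_mul_apply_eq_of_adjugate_eq_zero hF · · k)
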